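/- arXiv:1208.2157 — 2 statements merged into one kernel-verified Lean document; each statement's English description precedes it below -/
import Mathlib

section
/- Let π_ε(z) = f(εx|θ)f(θ)exp(−ρ(x))/C(ε) with C(ε) = ∫ f(εx|θ)f(θ)exp(−ρ(x)) dz, where f(·|θ) is continuously differentiable in x with uniformly bounded partial derivatives (bound M), f(θ) is a probability density, and ρ(x) = Σ|xᵢ| (so exp(−ρ) is integrable with ∫‖x‖₁exp(−ρ(x))dx < ∞). Assume C(ε) ≥ C₀ > 0 for ε in an interval [0,ε̄]. Then there exists a constant K such that ‖π_ε − π_{ε'}‖_TV ≤ K·|ε − ε'| for all ε, ε' ∈ [0,ε̄]. Consequently, for any monotone sequence ε_k ↓ 0, Σ_k ‖π_{ε_{k+1}} − π_{ε_k}‖_TV < ∞. -/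
/-!
Write `a_ε(θ, x) = f(εx | θ) f(θ) exp(-ρ(x))`. The mean value theorem along the ray
`t ↦ t • x` gives `|a_ε - a_ε'| ≤ |ε - ε'| · M ‖x‖₁ f(θ) exp(-ρ(x))`, an integrable bound, so
`ε ↦ a_ε` is Lipschitz in `L¹` and so is `C(ε) = ∫ a_ε`. Dividing by `C ≥ C₀ > 0` keeps this
Lipschitz, because `a/c - b/c' = (a - b)/c + b (c' - c)/(c c')` and `∫ |a_ε'|` is bounded on the
interval. Along an antitone schedule the TV increments are then dominated by
`K (ε_k - ε_{k+1})`, which telescopes.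
-/

open MeasureTheory Filter Topology Set

theorem abs_apply_le_of_abs_apply_single_le {ι : Type*} [Fintype ι] [DecidableEq ι]
    (L : (ι → ℝ) →L[ℝ] ℝ) {M : ℝ} (hL : ∀ i, |L (Pi.single i 1)| ≤ M) (x : ι → ℝ) :
    |L x| ≤ M * ∑ i, |x i| := by
  have hsum : L x = ∑ i, x i * L (Pi.single i 1) := by
    conv_lhs => rw [← Finset.univ_sum_single x]
    simp only [map_sum]
    refine Finset.sum_congr rfl fun i _ => ?_
    rw [← smul_eq_mul, ← L.map_smul, ← Pi.single_smul, smul_eq_mul, mul_one]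
  calc |L x| ≤ ∑ i, |x i * L (Pi.single i 1)| := hsum ▸ Finset.abs_sum_le_sum_abs _ _
    _ ≤ ∑ i, |x i| * M := by
      gcongr with i
      rw [abs_mul]
      exact mul_le_mul_of_nonneg_left (hL i) (abs_nonneg _)
    _ = M * ∑ i, |x i| := by rw [← Finset.sum_mul, mul_comm]

theorem abs_sub_le_of_abs_fderiv_single_le {ι : Type*} [Fintype ι] [DecidableEq ι]
    {f : (ι → ℝ) → ℝ} {M : ℝ} (hf : Differentiable ℝ f)
    (hM : ∀ y i, |fderiv ℝ f y (Pi.single i 1)| ≤ M) (x : ι → ℝ) (s t : ℝ) :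
    |f (s • x) - f (t • x)| ≤ M * (∑ i, |x i|) * |s - t| := by
  have hderiv (r : ℝ) : HasDerivAt (fun r : ℝ => f (r • x)) (fderiv ℝ f (r • x) x) r :=
    (hf (r • x)).hasFDerivAt.comp_hasDerivAt r (by simpa using (hasDerivAt_id r).smul_const x)
  simpa only [Real.norm_eq_abs] using Convex.norm_image_sub_le_of_norm_hasDerivWithin_le
    (fun r _ => (hderiv r).hasDerivWithinAt)
    (fun r _ => abs_apply_le_of_abs_apply_single_le _ (hM (r • x)) x) convex_univ
    (mem_univ t) (mem_univ s)

theorem abs_scaled_density_sub_le {ι Θ : Type*} [Fintype ι] [DecidableEq ι] {g : (ι → ℝ) → Θ → ℝ}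
    {M : ℝ} (hg : ∀ θ, Differentiable ℝ (fun x => g x θ))
    (hM : ∀ θ x i, |fderiv ℝ (fun x => g x θ) x (Pi.single i 1)| ≤ M)
    {p : Θ → ℝ} {w : (ι → ℝ) → ℝ} (hp : ∀ θ, 0 ≤ p θ) (hw : ∀ x, 0 ≤ w x)
    (ε ε' : ℝ) (θ : Θ) (x : ι → ℝ) :
    |g (ε • x) θ * p θ * w x - g (ε' • x) θ * p θ * w x|
      ≤ |ε - ε'| * (M * (p θ * ((∑ i, |x i|) * w x))) := by
  have hpw : 0 ≤ p θ * w x := mul_nonneg (hp θ) (hw x)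
  calc |g (ε • x) θ * p θ * w x - g (ε' • x) θ * p θ * w x|
      = |g (ε • x) θ - g (ε' • x) θ| * (p θ * w x) := by
        rw [← abs_of_nonneg hpw, ← abs_mul]
        ring_nf
    _ ≤ M * (∑ i, |x i|) * |ε - ε'| * (p θ * w x) := by
        gcongr
        exact abs_sub_le_of_abs_fderiv_single_le (hg θ) (hM θ) x ε ε'
    _ = |ε - ε'| * (M * (p θ * ((∑ i, |x i|) * w x))) := by ring

theorem abs_div_sub_div_le {a b c c' : ℝ} (hc : 0 < c) (hc' : 0 < c') :
    |a / c - b / c'| ≤ |a - b| / c + |b| * |c - c'| / (c * c') := by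
  have hsplit : a / c - b / c' = (a - b) / c + b * (c' - c) / (c * c') := by
    field_simp
    ring
  calc |a / c - b / c'| ≤ |(a - b) / c| + |b * (c' - c) / (c * c')| :=
        hsplit ▸ abs_add_le _ _
    _ = |a - b| / c + |b| * |c - c'| / (c * c') := by
      rw [abs_div, abs_div, abs_mul, abs_of_pos hc, abs_of_pos (mul_pos hc hc'), abs_sub_comm c']

section Normalization

variable {α : Type*} [MeasurableSpace α] {μ : Measure α}

theorem integral_abs_div_integral_sub_le {u v : α → ℝ} (hu : Integrable u μ)
    (hv : Integrable v μ) {c₀ : ℝ} (hc₀ : 0 < c₀) (huc : c₀ ≤ ∫ z, u z ∂μ)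
    (hvc : c₀ ≤ ∫ z, v z ∂μ) :
    ∫ z, |u z / ∫ z, u z ∂μ - v z / ∫ z, v z ∂μ| ∂μ
      ≤ (1 / c₀ + (∫ z, |v z| ∂μ) / c₀ ^ 2) * ∫ z, |u z - v z| ∂μ := by
  set cu := ∫ z, u z ∂μ
  set cv := ∫ z, v z ∂μ
  have hcu : 0 < cu := hc₀.trans_le huc
  have hcv : 0 < cv := hc₀.trans_le hvc
  have hdiff : |cu - cv| ≤ ∫ z, |u z - v z| ∂μ := by
    rw [← integral_sub hu hv]
    exact abs_integral_le_integral_abs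
  have hprod : c₀ ^ 2 ≤ cu * cv := by nlinarith
  calc ∫ z, |u z / cu - v z / cv| ∂μ
      ≤ ∫ z, (|u z - v z| / cu + |v z| * |cu - cv| / (cu * cv)) ∂μ :=
        integral_mono ((hu.div_const _).sub (hv.div_const _)).abs
          (((hu.sub hv).abs.div_const _).add ((hv.abs.mul_const _).div_const _))
          fun z => abs_div_sub_div_le hcu hcv
    _ = (∫ z, |u z - v z| ∂μ) / cu + (∫ z, |v z| ∂μ) * |cu - cv| / (cu * cv) := by
        rw [integral_add (f := fun z => |u z - v z| / cu)
            (g := fun z => |v z| * |cu - cv| / (cu * cv)) ((hu.sub hv).abs.div_const _)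
            ((hv.abs.mul_const _).div_const _), integral_div, integral_div, integral_mul_const]
    _ ≤ (∫ z, |u z - v z| ∂μ) / c₀ + (∫ z, |v z| ∂μ) * (∫ z, |u z - v z| ∂μ) / c₀ ^ 2 := by
        gcongr
    _ = (1 / c₀ + (∫ z, |v z| ∂μ) / c₀ ^ 2) * ∫ z, |u z - v z| ∂μ := by ring

theorem exists_lipschitz_integral_abs_div_integral_sub (a : ℝ → α → ℝ) {F : α → ℝ}
    (hF : Integrable F μ) (hlip : ∀ ε ε' z, |a ε z - a ε' z| ≤ |ε - ε'| * F z)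
    {s t c₀ : ℝ} (hst : s ≤ t) (hc₀ : 0 < c₀) (hlow : ∀ ε ∈ Icc s t, c₀ ≤ ∫ z, a ε z ∂μ) :
    ∃ K, ∀ ε ∈ Icc s t, ∀ ε' ∈ Icc s t,
      ∫ z, |a ε z / ∫ z, a ε z ∂μ - a ε' z / ∫ z, a ε' z ∂μ| ∂μ ≤ K * |ε - ε'| := by
  -- a non-integrable function has Bochner integral `0`, which is not `≥ c₀ > 0`
  have hint : ∀ ε ∈ Icc s t, Integrable (a ε) μ := fun ε hε => by
    by_contra h
    have := hlow ε hε
    rw [integral_undef h] at this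
    linarith
  have hF0 (z : α) : 0 ≤ F z := by simpa using (abs_nonneg _).trans (hlip 1 0 z)
  have hL1 : ∀ ε ∈ Icc s t, ∀ ε' ∈ Icc s t,
      ∫ z, |a ε z - a ε' z| ∂μ ≤ |ε - ε'| * ∫ z, F z ∂μ := fun ε hε ε' hε' => by
    rw [← integral_const_mul]
    exact integral_mono ((hint ε hε).sub (hint ε' hε')).abs (hF.const_mul _) (hlip ε ε')
  obtain ⟨A, hA⟩ : ∃ A, ∀ ε ∈ Icc s t, ∫ z, |a ε z| ∂μ ≤ A := ⟨_, fun ε hε => by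
    have hs : s ∈ Icc s t := ⟨le_rfl, hst⟩
    have hεs : |ε - s| ≤ t - s := by rw [abs_of_nonneg (by linarith [hε.1])]; linarith [hε.2]
    calc ∫ z, |a ε z| ∂μ ≤ ∫ z, (|a s z| + |a ε z - a s z|) ∂μ :=
          integral_mono (hint ε hε).abs ((hint s hs).abs.add ((hint ε hε).sub (hint s hs)).abs)
            fun z => by linarith [abs_sub_abs_le_abs_sub (a ε z) (a s z)]
      _ ≤ ∫ z, |a s z| ∂μ + (t - s) * ∫ z, F z ∂μ := by
          rw [integral_add (g := fun z => |a ε z - a s z|) (hint s hs).abs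
            ((hint ε hε).sub (hint s hs)).abs]
          gcongr
          exact (hL1 ε hε s hs).trans (by gcongr; exact integral_nonneg hF0)⟩
  refine ⟨(1 / c₀ + A / c₀ ^ 2) * ∫ z, F z ∂μ, fun ε hε ε' hε' => ?_⟩
  calc _ ≤ (1 / c₀ + (∫ z, |a ε' z| ∂μ) / c₀ ^ 2) * ∫ z, |a ε z - a ε' z| ∂μ :=
        integral_abs_div_integral_sub_le (hint ε hε) (hint ε' hε') hc₀ (hlow ε hε) (hlow ε' hε')
    _ ≤ (1 / c₀ + A / c₀ ^ 2) * (|ε - ε'| * ∫ z, F z ∂μ) := by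
        gcongr
        · have : 0 ≤ A := (integral_nonneg fun _ => abs_nonneg _).trans (hA ε' hε')
          positivity
        · exact hA ε' hε'
        · exact hL1 ε hε ε' hε'
    _ = _ := by ring

end Normalization

theorem Antitone.hasSum_sub_succ {u : ℕ → ℝ} (hu : Antitone u) {l : ℝ}
    (hl : Tendsto u atTop (𝓝 l)) : HasSum (fun k => u k - u (k + 1)) (u 0 - l) := by
  rw [hasSum_iff_tendsto_nat_of_nonneg (fun k => sub_nonneg.2 (hu k.le_succ))]
  simpa only [Finset.sum_range_sub'] using hl.const_sub (u 0)

theorem Antitone.summable_of_le_mul_abs_sub_succ {u d : ℕ → ℝ} (hu : Antitone u) {l K : ℝ}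
    (hl : Tendsto u atTop (𝓝 l)) (hd₀ : ∀ k, 0 ≤ d k) (hd : ∀ k, d k ≤ K * |u (k + 1) - u k|) :
    Summable d := by
  refine Summable.of_nonneg_of_le hd₀ (fun k => ?_) ((hu.hasSum_sub_succ hl).summable.mul_left K)
  simpa only [abs_sub_comm (u (k + 1)), abs_of_nonneg (sub_nonneg.2 (hu k.le_succ))] using hd k

/-- Lipschitz continuity in `ε` of the scaled equilibrium distributions
`π_ε(θ,x) = f(εx|θ)f(θ)exp(−ρ(x))/C(ε)` in total variation, and summability of TV
increments along any monotone schedule `ε_k ↓ 0`. Here `ρ(x) = Σᵢ|xᵢ|`. -/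
theorem stmt_8 {n : ℕ} {Θ : Type*} [MeasurableSpace Θ] (νm : Measure Θ)
    (g : (Fin n → ℝ) → Θ → ℝ) (fθ : Θ → ℝ) (M : ℝ)
    (hdiff : ∀ θ, ContDiff ℝ 1 (fun x => g x θ))
    (hbound : ∀ θ (x : Fin n → ℝ) (i : Fin n),
      |fderiv ℝ (fun x => g x θ) x (Pi.single i 1)| ≤ M)
    (hfθ0 : ∀ θ, 0 ≤ fθ θ) (hfθ1 : ∫ θ, fθ θ ∂νm = 1)
    (hint : Integrable
      (fun x : Fin n → ℝ => (∑ i, |x i|) * Real.exp (-(∑ i, |x i|))) volume)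
    (C : ℝ → ℝ)
    (hC : C = fun ε => ∫ z : Θ × (Fin n → ℝ),
      g (ε • z.2) z.1 * fθ z.1 * Real.exp (-(∑ i, |z.2 i|)) ∂(νm.prod volume))
    (π : ℝ → Θ × (Fin n → ℝ) → ℝ)
    (hπ : π = fun ε z =>
      g (ε • z.2) z.1 * fθ z.1 * Real.exp (-(∑ i, |z.2 i|)) / C ε)
    (εbar C₀ : ℝ) (hεbar : 0 ≤ εbar) (hC₀ : 0 < C₀)
    (hClower : ∀ ε ∈ Set.Icc 0 εbar, C₀ ≤ C ε) :
    ∃ K : ℝ,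
      (∀ ε ∈ Set.Icc 0 εbar, ∀ ε' ∈ Set.Icc 0 εbar,
        (1 / 2) * ∫ z, |π ε z - π ε' z| ∂(νm.prod volume) ≤ K * |ε - ε'|) ∧
      ∀ εs : ℕ → ℝ, Antitone εs → (∀ k, εs k ∈ Set.Icc 0 εbar) →
        Filter.Tendsto εs Filter.atTop (nhds 0) →
        Summable fun k =>
          (1 / 2) * ∫ z, |π (εs (k + 1)) z - π (εs k) z| ∂(νm.prod volume) := by
  subst hC
  have hfθint : Integrable fθ νm :=
    Integrable.of_integral_ne_zero (by rw [hfθ1]; exact one_ne_zero)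
  obtain ⟨K, hK⟩ := exists_lipschitz_integral_abs_div_integral_sub (μ := νm.prod volume)
    (fun ε z => g (ε • z.2) z.1 * fθ z.1 * Real.exp (-(∑ i, |z.2 i|)))
    ((hfθint.mul_prod hint).const_mul M)
    (fun ε ε' z => abs_scaled_density_sub_le (fun θ => (hdiff θ).differentiable one_ne_zero)
      hbound hfθ0 (fun _ => (Real.exp_pos _).le) ε ε' z.1 z.2)
    hεbar hC₀ hClower
  have hTV : ∀ ε ∈ Icc 0 εbar, ∀ ε' ∈ Icc 0 εbar,
      1 / 2 * ∫ z, |π ε z - π ε' z| ∂(νm.prod volume) ≤ 1 / 2 * K * |ε - ε'| := by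
    subst hπ
    intro ε hε ε' hε'
    rw [mul_assoc]
    exact mul_le_mul_of_nonneg_left (hK ε hε ε' hε') one_half_pos.le
  refine ⟨1 / 2 * K, hTV, fun εs hanti hmem hlim => ?_⟩
  exact hanti.summable_of_le_mul_abs_sub_succ hlim (fun k => by positivity)
    fun k => hTV _ (hmem (k + 1)) _ (hmem k)
end

section
/- Let ε^e(U) ∈ (0,U) be the unique solution of (U² − e²)²/(2e³) = v/γ for U > 0 (v, γ > 0 fixed). Then ε^e(U) = (γ/(2v))^{1/3} U^{4/3} + O(U²) as U → 0⁺; in particular ε^e(U)/U^{4/3} → (γ/(2v))^{1/3}. -/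
/-!
Put `c = (γ/(2v))^{1/3}`, `x = U^{2/3}` and `t = (U² - e²)^{1/3}`. The equation says `e = c t²`
and `t³ + e² = x³`, so `t ≤ x` and `e ≤ c x²`; moreover
`x (x² - t²) ≤ (x - t)(x² + x t + t²) = e² ≤ c² x⁴`, whence `c x² - e ≤ c³ x³`. Thus
`c U^{4/3} - (γ/(2v)) U² ≤ ε^e(U) ≤ c U^{4/3}` for every `U > 0`, and both claims follow.
-/

open Filter

theorem bounds_of_cube_add_sq_eq_cube {c x t e : ℝ} (hc : 0 ≤ c) (hx : 0 < x) (ht : 0 ≤ t)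
    (hcube : t ^ 3 + e ^ 2 = x ^ 3) (he : e = c * t ^ 2) :
    c * x ^ 2 - c ^ 3 * x ^ 3 ≤ e ∧ e ≤ c * x ^ 2 := by
  have htx : t ≤ x := le_of_pow_le_pow_left₀ three_ne_zero hx.le (by nlinarith)
  have he_le : e ≤ c * x ^ 2 := he ▸ by gcongr
  have he_nonneg : 0 ≤ e := he ▸ by positivity
  have hgap : x * (x ^ 2 - t ^ 2) ≤ (c * x ^ 2) ^ 2 := by
    nlinarith [mul_nonneg (sub_nonneg.2 htx) (sq_nonneg t), pow_le_pow_left₀ he_nonneg he_le 2]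
  have hgap' : x ^ 2 - t ^ 2 ≤ c ^ 2 * x ^ 3 := by
    rw [← mul_le_mul_iff_right₀ hx]; nlinarith
  refine ⟨?_, he_le⟩
  nlinarith [mul_le_mul_of_nonneg_left hgap' hc]

theorem rpow_div_natCast_pow {x : ℝ} (hx : 0 ≤ x) (y : ℝ) {n : ℕ} (hn : n ≠ 0) :
    (x ^ (y / n)) ^ n = x ^ y := by
  rw [← Real.rpow_mul_natCast hx, div_mul_cancel₀ _ (Nat.cast_ne_zero.2 hn)]

theorem bounds_of_cube_eq_mul_sq_sub_sq {a U e : ℝ} (ha : 0 ≤ a) (hU : 0 < U) (he0 : 0 ≤ e)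
    (heU : e ≤ U) (heq : e ^ 3 = a * (U ^ 2 - e ^ 2) ^ 2) :
    a ^ ((1:ℝ) / 3) * U ^ ((4:ℝ) / 3) - a * U ^ 2 ≤ e ∧ e ≤ a ^ ((1:ℝ) / 3) * U ^ ((4:ℝ) / 3) := by
  have hd : 0 ≤ U ^ 2 - e ^ 2 := by nlinarith
  have hc : (a ^ ((1:ℝ) / 3)) ^ 3 = a := by simpa using rpow_div_natCast_pow ha 1 three_ne_zero
  have hx2 : (U ^ ((2:ℝ) / 3)) ^ 2 = U ^ ((4:ℝ) / 3) := by
    rw [← Real.rpow_mul_natCast hU.le]; norm_num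
  have hx3 : (U ^ ((2:ℝ) / 3)) ^ 3 = U ^ 2 := by
    simpa using rpow_div_natCast_pow hU.le 2 three_ne_zero
  have ht3 : ((U ^ 2 - e ^ 2) ^ ((1:ℝ) / 3)) ^ 3 = U ^ 2 - e ^ 2 := by
    simpa using rpow_div_natCast_pow hd 1 three_ne_zero
  have he : e = a ^ ((1:ℝ) / 3) * ((U ^ 2 - e ^ 2) ^ ((1:ℝ) / 3)) ^ 2 := by
    refine (pow_left_inj₀ he0 (by positivity) three_ne_zero).1 ?_
    rw [heq, mul_pow, hc, ← pow_mul, mul_comm 2 3, pow_mul, ht3]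
  have := bounds_of_cube_add_sq_eq_cube (Real.rpow_nonneg ha _) (Real.rpow_pos_of_pos hU (2 / 3))
    (Real.rpow_nonneg hd _) (by rw [ht3, hx3]; ring) he
  rwa [hx2, hx3, hc] at this

theorem tendsto_div_rpow_four_thirds_of_bounds {f : ℝ → ℝ} {a c : ℝ}
    (hf : ∀ U, 0 < U → c * U ^ ((4:ℝ) / 3) - a * U ^ 2 ≤ f U ∧ f U ≤ c * U ^ ((4:ℝ) / 3)) :
    Tendsto (fun U => f U / U ^ ((4:ℝ) / 3)) (nhdsWithin 0 (Set.Ioi 0)) (nhds c) := by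
  have hlower : Tendsto (fun U : ℝ => c - a * U ^ ((2:ℝ) / 3))
      (nhdsWithin 0 (Set.Ioi 0)) (nhds c) := by
    refine tendsto_nhdsWithin_of_tendsto_nhds ?_
    convert ((Real.continuousAt_rpow_const 0 ((2:ℝ) / 3) (by norm_num)).const_mul a).const_sub c
      using 2
    simp
  refine tendsto_of_tendsto_of_tendsto_of_le_of_le' hlower tendsto_const_nhds ?_ ?_
  all_goals filter_upwards [self_mem_nhdsWithin] with U (hU : 0 < U)
  · rw [le_div_iff₀ (Real.rpow_pos_of_pos hU _)]
    have hU2 : U ^ ((2:ℝ) / 3) * U ^ ((4:ℝ) / 3) = U ^ 2 := by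
      rw [← Real.rpow_add hU]; norm_num
    rw [sub_mul, mul_assoc, hU2]
    exact (hf U hU).1
  · exact (div_le_iff₀ (Real.rpow_pos_of_pos hU _)).2 (hf U hU).2

/-- Asymptotics of the optimal cooling schedule: the unique solution `ε^e(U) ∈ (0,U)` of
`(U² − e²)²/(2e³) = v/γ` satisfies `ε^e(U) = (γ/(2v))^{1/3} U^{4/3} + O(U²)` as `U → 0⁺`;
in particular `ε^e(U)/U^{4/3} → (γ/(2v))^{1/3}`. -/
theorem stmt_17 (v γ : ℝ) (hv : 0 < v) (hγ : 0 < γ)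
    (εe : ℝ → ℝ)
    (hεe : ∀ U : ℝ, 0 < U → εe U ∈ Set.Ioo 0 U ∧
      (U ^ 2 - εe U ^ 2) ^ 2 / (2 * εe U ^ 3) = v / γ) :
    Tendsto (fun U => εe U / U ^ ((4:ℝ) / 3)) (nhdsWithin 0 (Set.Ioi 0))
        (nhds ((γ / (2 * v)) ^ ((1:ℝ) / 3))) ∧
      (fun U => εe U - (γ / (2 * v)) ^ ((1:ℝ) / 3) * U ^ ((4:ℝ) / 3)) =O[nhdsWithin 0 (Set.Ioi 0)]
        (fun U => U ^ 2) := by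
  set a := γ / (2 * v)
  have hbounds (U : ℝ) (hU : 0 < U) :
      a ^ ((1:ℝ) / 3) * U ^ ((4:ℝ) / 3) - a * U ^ 2 ≤ εe U ∧
        εe U ≤ a ^ ((1:ℝ) / 3) * U ^ ((4:ℝ) / 3) := by
    obtain ⟨⟨he0, heU⟩, heq⟩ := hεe U hU
    have hcube : εe U ^ 3 = γ / (2 * v) * (U ^ 2 - εe U ^ 2) ^ 2 := by
      field_simp at heq ⊢
      linarith
    exact bounds_of_cube_eq_mul_sq_sub_sq (by positivity) hU he0.le heU.le hcube
  refine ⟨tendsto_div_rpow_four_thirds_of_bounds hbounds, Asymptotics.IsBigO.of_bound a ?_⟩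
  filter_upwards [self_mem_nhdsWithin] with U (hU : 0 < U)
  rw [Real.norm_eq_abs, Real.norm_eq_abs, abs_sub_le_iff, abs_of_nonneg (sq_nonneg U)]
  constructor <;> linarith [hbounds U hU]
end
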